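/- arXiv:2211.15882 — 2 statements merged into one kernel-verified Lean document; each statement's English description precedes it below -/
import Mathlib

section
/- Let D = D_α be the diagonal operator on E_ω associated with a bounded sequence α : ℕ → K, and let μ ∈ K. Assume μ is isolated from the other diagonal entries, i.e. there exists ε > 0 such that ‖μ − α_i‖ ≥ ε for every i with α_i ≠ μ. Then the range of μ·I − D is exactly R(μI − D) = { v ∈ E_ω : ∀ i ∈ ℕ, α_i = μ → v_i = 0 }, and in particular R(μI − D) is a closed subspace of E_ω. -/
/-! Off the zero set of `μ - α`, the multiplier `(μ - α i)⁻¹` is bounded by `ε⁻¹`, so dividing a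
sequence that vanishes there by `μ - α` stays in `E_ω` and gives a preimage. Since `ω i ≠ 0`,
every coordinate is continuous on `E_ω`, so the range, an intersection of coordinate
hyperplanes, is closed. -/

open Filter Topology

/-- The non-Archimedean Hilbert space `E_ω`: the space of sequences `u : ℕ → K`
such that `‖u i‖ * ‖ω i‖^(1/2) → 0`, as a submodule of `ℕ → K`. -/
def Eomega (K : Type*) [NontriviallyNormedField K] (ω : ℕ → K) : Submodule K (ℕ → K) where
  carrier := {u | Tendsto (fun i => ‖u i‖ * Real.sqrt ‖ω i‖) atTop (𝓝 0)}
  zero_mem' := by simpa using (tendsto_const_nhds : Tendsto (fun _ : ℕ => (0:ℝ)) atTop (𝓝 0))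
  add_mem' := by
    intro u v hu hv
    have h := hu.add hv
    rw [add_zero] at h
    refine squeeze_zero (fun i => by positivity) (fun i => ?_) h
    calc ‖(u + v) i‖ * Real.sqrt ‖ω i‖
        ≤ (‖u i‖ + ‖v i‖) * Real.sqrt ‖ω i‖ := by
          have : ‖(u + v) i‖ ≤ ‖u i‖ + ‖v i‖ := by
            simpa [Pi.add_apply] using norm_add_le (u i) (v i)
          exact mul_le_mul_of_nonneg_right this (Real.sqrt_nonneg _)
      _ = ‖u i‖ * Real.sqrt ‖ω i‖ + ‖v i‖ * Real.sqrt ‖ω i‖ := by ring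
  smul_mem' := by
    intro c u hu
    have h := hu.const_mul ‖c‖
    rw [mul_zero] at h
    refine squeeze_zero (fun i => by positivity) (fun i => le_of_eq ?_) h
    simp [Pi.smul_apply, norm_smul, mul_assoc]

lemma Eomega.bddAbove {K : Type*} [NontriviallyNormedField K] {ω : ℕ → K}
    (u : Eomega K ω) :
    BddAbove (Set.range fun i => ‖(u : ℕ → K) i‖ * Real.sqrt ‖ω i‖) :=
  u.2.bddAbove_range

/-- The sup-norm on `E_ω`: `‖u‖ = sup_i ‖u i‖ * ‖ω i‖^(1/2)`. -/
noncomputable instance Eomega.instSeminormedAddCommGroup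
    {K : Type*} [NontriviallyNormedField K] {ω : ℕ → K} :
    SeminormedAddCommGroup (Eomega K ω) :=
  AddGroupSeminorm.toSeminormedAddCommGroup
    { toFun := fun u => ⨆ i, ‖(u : ℕ → K) i‖ * Real.sqrt ‖ω i‖
      map_zero' := by simp
      add_le' := by
        intro u v
        refine ciSup_le fun i => ?_
        calc ‖((u + v : Eomega K ω) : ℕ → K) i‖ * Real.sqrt ‖ω i‖
            ≤ ‖(u : ℕ → K) i‖ * Real.sqrt ‖ω i‖ + ‖(v : ℕ → K) i‖ * Real.sqrt ‖ω i‖ := by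
              have : ‖((u + v : Eomega K ω) : ℕ → K) i‖ ≤ ‖(u : ℕ → K) i‖ + ‖(v : ℕ → K) i‖ := by
                simpa using norm_add_le ((u : ℕ → K) i) ((v : ℕ → K) i)
              nlinarith [Real.sqrt_nonneg ‖ω i‖, norm_nonneg ((u : ℕ → K) i),
                norm_nonneg ((v : ℕ → K) i)]
          _ ≤ _ := add_le_add (le_ciSup (Eomega.bddAbove u) i) (le_ciSup (Eomega.bddAbove v) i)
      neg' := by intro u; simp }


/-- Shortcut instance making sure that the topology of `E_ω` used below is the
norm topology (and not the topology induced by the product topology on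
`ℕ → K`). -/
noncomputable instance (priority := 5000) Eomega.instTopologicalSpace
    {K : Type*} [NontriviallyNormedField K] {ω : ℕ → K} :
    TopologicalSpace (Eomega K ω) :=
  Eomega.instSeminormedAddCommGroup.toUniformSpace.toTopologicalSpace

/-- The diagonal operator `D = D_α` on `E_ω` associated with a bounded
sequence `α : ℕ → K`, given by `(D u) i = α i * u i`. -/
def diagOp {K : Type*} [NontriviallyNormedField K] (ω : ℕ → K) (α : ℕ → K)
    (hα : ∃ C, ∀ i, ‖α i‖ ≤ C) : Eomega K ω →ₗ[K] Eomega K ω where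
  toFun u := ⟨fun i => α i * (u : ℕ → K) i, by
    obtain ⟨C, hC⟩ := hα
    have h := u.2.const_mul C
    rw [mul_zero] at h
    refine squeeze_zero (fun i => by positivity) (fun i => ?_) h
    calc ‖α i * (u : ℕ → K) i‖ * Real.sqrt ‖ω i‖
        = ‖α i‖ * (‖(u : ℕ → K) i‖ * Real.sqrt ‖ω i‖) := by rw [norm_mul]; ring
      _ ≤ C * (‖(u : ℕ → K) i‖ * Real.sqrt ‖ω i‖) :=
          mul_le_mul_of_nonneg_right (hC i) (by positivity)⟩
  map_add' u v := by
    apply Subtype.ext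
    funext i
    simp [mul_add]
  map_smul' c u := by
    apply Subtype.ext
    funext i
    simp [Pi.smul_apply, smul_eq_mul]
    ring

namespace Eomega

variable {K : Type*} [NontriviallyNormedField K] {ω : ℕ → K}

lemma norm_apply_mul_sqrt_le (u : Eomega K ω) (i : ℕ) :
    ‖(u : ℕ → K) i‖ * Real.sqrt ‖ω i‖ ≤ ‖u‖ :=
  le_ciSup (Eomega.bddAbove u) i

lemma continuous_apply {i : ℕ} (hωi : ω i ≠ 0) :
    Continuous fun u : Eomega K ω => (u : ℕ → K) i := by
  have hpos : 0 < Real.sqrt ‖ω i‖ := Real.sqrt_pos.mpr (norm_pos_iff.mpr hωi)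
  refine AddMonoidHomClass.continuous_of_bound
    ((LinearMap.proj i).comp (Eomega K ω).subtype) (Real.sqrt ‖ω i‖)⁻¹ fun u => ?_
  rw [inv_mul_eq_div, le_div_iff₀ hpos]
  exact norm_apply_mul_sqrt_le u i

lemma isClosed_setOf_forall_apply_eq_zero (hω : ∀ i, ω i ≠ 0) (p : ℕ → Prop) :
    IsClosed {v : Eomega K ω | ∀ i, p i → (v : ℕ → K) i = 0} := by
  rw [← Set.iInter_ofPred]
  exact isClosed_iInter fun i =>
    isClosed_imp isOpen_const (isClosed_eq (continuous_apply (hω i)) continuous_const)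

lemma mul_mem {c : ℕ → K} (hc : ∃ C, ∀ i, ‖c i‖ ≤ C) {u : ℕ → K} (hu : u ∈ Eomega K ω) :
    (fun i => c i * u i) ∈ Eomega K ω := by
  obtain ⟨C, hC⟩ := hc
  have h := (show Tendsto _ _ _ from hu).const_mul C
  rw [mul_zero] at h
  refine squeeze_zero (fun i => by positivity) (fun i => ?_) h
  rw [norm_mul, mul_assoc]
  gcongr
  exact hC i

lemma range_eq_of_apply_eq_mul {T : Eomega K ω →ₗ[K] Eomega K ω} {β : ℕ → K}
    (hT : ∀ u i, (T u : ℕ → K) i = β i * (u : ℕ → K) i)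
    (hβ : ∃ ε > 0, ∀ i, β i ≠ 0 → ε ≤ ‖β i‖) :
    (LinearMap.range T : Set (Eomega K ω)) =
      {v : Eomega K ω | ∀ i, β i = 0 → (v : ℕ → K) i = 0} := by
  ext v
  constructor
  · rintro ⟨u, rfl⟩ i hi
    rw [hT, hi, zero_mul]
  · intro hv
    obtain ⟨ε, hε, hεβ⟩ := hβ
    -- `(β i)⁻¹ = 0` where `β i = 0`, so this is the inverse of `β` off its zero set.
    have hinv : ∀ i, ‖(β i)⁻¹‖ ≤ ε⁻¹ := fun i => by
      by_cases hi : β i = 0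
      · simp [hi, hε.le]
      · rw [norm_inv]
        exact inv_anti₀ hε (hεβ i hi)
    refine ⟨⟨_, mul_mem ⟨ε⁻¹, hinv⟩ v.2⟩, Subtype.ext (funext fun i => ?_)⟩
    rw [hT]
    by_cases hi : β i = 0
    · simp [hi, hv i hi]
    · exact mul_inv_cancel_left₀ hi _

end Eomega

lemma smul_id_sub_diagOp_apply {K : Type*} [NontriviallyNormedField K] {ω α : ℕ → K}
    (hα : ∃ C, ∀ i, ‖α i‖ ≤ C) (μ : K) (u : Eomega K ω) (i : ℕ) :
    ((μ • LinearMap.id - diagOp ω α hα : Eomega K ω →ₗ[K] Eomega K ω) u : ℕ → K) i =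
      (μ - α i) * (u : ℕ → K) i :=
  (sub_mul μ (α i) _).symm

theorem stmt7_general {K : Type*} [NontriviallyNormedField K]
    (ω : ℕ → K) (hω : ∀ i, ω i ≠ 0)
    (α : ℕ → K) (hα : ∃ C, ∀ i, ‖α i‖ ≤ C) (μ : K)
    (hiso : ∃ ε > 0, ∀ i : ℕ, α i ≠ μ → ε ≤ ‖μ - α i‖) :
    (LinearMap.range (μ • LinearMap.id - diagOp ω α hα) : Set (Eomega K ω)) =
      {v : Eomega K ω | ∀ i : ℕ, α i = μ → (v : ℕ → K) i = 0} ∧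
    IsClosed (LinearMap.range (μ • LinearMap.id - diagOp ω α hα) : Set (Eomega K ω)) := by
  have hrange : (LinearMap.range (μ • LinearMap.id - diagOp ω α hα) : Set (Eomega K ω)) =
      {v : Eomega K ω | ∀ i : ℕ, α i = μ → (v : ℕ → K) i = 0} := by
    obtain ⟨ε, hε, hεiso⟩ := hiso
    rw [Eomega.range_eq_of_apply_eq_mul (smul_id_sub_diagOp_apply hα μ)
      ⟨ε, hε, fun i hi => hεiso i fun h => hi (sub_eq_zero.mpr h.symm)⟩]
    simp only [sub_eq_zero, eq_comm]
  exact ⟨hrange, hrange ▸ Eomega.isClosed_setOf_forall_apply_eq_zero hω _⟩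

/-- If `μ` is isolated from the other diagonal entries, then the
range of `μI − D` is exactly `{v | α i = μ → v i = 0}`; in particular it is a
closed subspace of `E_ω`. -/
theorem stmt7 {K : Type*} [NontriviallyNormedField K] [CompleteSpace K]
    (hna : ∀ x y : K, ‖x + y‖ ≤ max ‖x‖ ‖y‖)
    (ω : ℕ → K) (hω : ∀ i, ω i ≠ 0)
    (α : ℕ → K) (hα : ∃ C, ∀ i, ‖α i‖ ≤ C) (μ : K)
    (hiso : ∃ ε > 0, ∀ i : ℕ, α i ≠ μ → ε ≤ ‖μ - α i‖) :
    (LinearMap.range (μ • LinearMap.id - diagOp ω α hα) : Set (Eomega K ω)) =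
      {v : Eomega K ω | ∀ i : ℕ, α i = μ → (v : ℕ → K) i = 0} ∧
    IsClosed (LinearMap.range (μ • LinearMap.id - diagOp ω α hα) : Set (Eomega K ω)) :=
  stmt7_general ω hω α hα μ hiso
end

section
/- Let D = D_α be a diagonal operator on E_ω of finite rank, i.e. the set { i ∈ ℕ : α_i ≠ 0 } is finite. Then the spectrum of D is finite and equals the point spectrum: σ(D) = σ_p(D) = { α_i : i ∈ ℕ }. -/
open Filter Topology

/-- The spectrum of `D`: those `μ` such that `μ·I − D` has no bounded (i.e.
continuous) two-sided inverse. -/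
def specSet {K : Type*} [NontriviallyNormedField K] {ω : ℕ → K}
    (D : Eomega K ω →ₗ[K] Eomega K ω) : Set K :=
  {μ | ¬ ∃ S : Eomega K ω →ₗ[K] Eomega K ω, Continuous S ∧
        S ∘ₗ (μ • LinearMap.id - D) = LinearMap.id ∧
        (μ • LinearMap.id - D) ∘ₗ S = LinearMap.id}

/-- The point spectrum of `D`: the set of eigenvalues, i.e. the `μ` with
`N(μI − D) ≠ {0}`. -/
def pointSpec {K : Type*} [NontriviallyNormedField K] {ω : ℕ → K}
    (D : Eomega K ω →ₗ[K] Eomega K ω) : Set K :=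
  {μ | LinearMap.ker (μ • LinearMap.id - D) ≠ ⊥}

/-!
Each `α j` is an eigenvalue of `D_α`, with eigenvector the unit sequence `e_j`. For `μ` outside
the range of `α`, the inverse of `μ I - D_α` is the diagonal operator with entries `(μ - α i)⁻¹`;
when `α` takes only finitely many values these entries are bounded, so the inverse is bounded.
-/

section Diagonal

variable {K : Type*} [NontriviallyNormedField K] {ω : ℕ → K}

lemma Eomega.norm_def (u : Eomega K ω) : ‖u‖ = ⨆ i, ‖(u : ℕ → K) i‖ * Real.sqrt ‖ω i‖ := rfl

lemma Eomega.pi_single_mem (j : ℕ) (c : K) : Pi.single j c ∈ Eomega K ω := by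
  refine tendsto_const_nhds.congr' ?_
  filter_upwards [eventually_gt_atTop j] with i hi
  simp [Pi.single_eq_of_ne hi.ne']

@[simp]
lemma diagOp_apply_coe (α : ℕ → K) (hα : ∃ C, ∀ i, ‖α i‖ ≤ C) (u : Eomega K ω) (i : ℕ) :
    ((diagOp ω α hα u : Eomega K ω) : ℕ → K) i = α i * (u : ℕ → K) i := rfl

lemma smul_id_sub_diagOp_apply_coe (α : ℕ → K) (hα : ∃ C, ∀ i, ‖α i‖ ≤ C) (μ : K)
    (u : Eomega K ω) (i : ℕ) :
    (((μ • LinearMap.id - diagOp ω α hα : Eomega K ω →ₗ[K] Eomega K ω) u : Eomega K ω) : ℕ → K) i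
      = (μ - α i) * (u : ℕ → K) i := by
  simp [sub_mul]

lemma continuous_diagOp (α : ℕ → K) (hα : ∃ C, ∀ i, ‖α i‖ ≤ C) :
    Continuous (diagOp ω α hα) := by
  obtain ⟨C, hC⟩ := hα
  have hC0 : 0 ≤ C := (norm_nonneg _).trans (hC 0)
  refine AddMonoidHomClass.continuous_of_bound (diagOp ω α ⟨C, hC⟩) C fun u => ?_
  rw [Eomega.norm_def, Eomega.norm_def]
  refine ciSup_le fun i => ?_
  calc ‖α i * (u : ℕ → K) i‖ * Real.sqrt ‖ω i‖
      = ‖α i‖ * (‖(u : ℕ → K) i‖ * Real.sqrt ‖ω i‖) := by rw [norm_mul, mul_assoc]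
    _ ≤ C * ⨆ i, ‖(u : ℕ → K) i‖ * Real.sqrt ‖ω i‖ :=
      mul_le_mul (hC i) (le_ciSup (Eomega.bddAbove u) i) (by positivity) hC0

lemma pointSpec_subset_specSet (D : Eomega K ω →ₗ[K] Eomega K ω) :
    pointSpec D ⊆ specSet D :=
  fun _ hμ ⟨_, _, hleft, _⟩ => hμ (LinearMap.ker_eq_bot_of_inverse hleft)

lemma apply_mem_pointSpec_diagOp (α : ℕ → K) (hα : ∃ C, ∀ i, ‖α i‖ ≤ C) (j : ℕ) :
    α j ∈ pointSpec (diagOp ω α hα) := by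
  classical
  let e : Eomega K ω := ⟨Pi.single j 1, Eomega.pi_single_mem j 1⟩
  refine (Submodule.ne_bot_iff _).2 ⟨e, ?_, fun he => ?_⟩
  · rw [LinearMap.mem_ker]
    ext i
    rw [smul_id_sub_diagOp_apply_coe]
    rcases eq_or_ne i j with rfl | hij
    · rw [sub_self, zero_mul]; rfl
    · simp [e, Pi.single_eq_of_ne hij]
  · simpa [e] using congrArg (fun u : Eomega K ω => (u : ℕ → K) j) he

lemma range_subset_pointSpec_diagOp (α : ℕ → K) (hα : ∃ C, ∀ i, ‖α i‖ ≤ C) :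
    Set.range α ⊆ pointSpec (diagOp ω α hα) :=
  Set.range_subset_iff.2 (apply_mem_pointSpec_diagOp α hα)

lemma notMem_specSet_diagOp (α : ℕ → K) (hα : ∃ C, ∀ i, ‖α i‖ ≤ C) {μ : K}
    (hμ : ∀ i, α i ≠ μ) (hinv : ∃ C, ∀ i, ‖(μ - α i)⁻¹‖ ≤ C) :
    μ ∉ specSet (diagOp ω α hα) := by
  have hne : ∀ i, μ - α i ≠ 0 := fun i => sub_ne_zero.2 (hμ i).symm
  refine not_not.2 ⟨diagOp ω (fun i => (μ - α i)⁻¹) hinv, continuous_diagOp _ hinv, ?_, ?_⟩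
  · ext u i
    rw [LinearMap.comp_apply, diagOp_apply_coe, smul_id_sub_diagOp_apply_coe]
    exact inv_mul_cancel_left₀ (hne i) _
  · ext u i
    rw [LinearMap.comp_apply, smul_id_sub_diagOp_apply_coe, diagOp_apply_coe]
    exact mul_inv_cancel_left₀ (hne i) _

lemma specSet_diagOp_subset_range (α : ℕ → K) (hα : ∃ C, ∀ i, ‖α i‖ ≤ C)
    (hα_fin : (Set.range α).Finite) : specSet (diagOp ω α hα) ⊆ Set.range α := by
  intro μ hμ
  by_contra hμα
  have hinv : ∃ C, ∀ i, ‖(μ - α i)⁻¹‖ ≤ C := by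
    obtain ⟨C, hC⟩ := (hα_fin.image fun x => ‖(μ - x)⁻¹‖).bddAbove
    exact ⟨C, fun i => hC ⟨α i, ⟨i, rfl⟩, rfl⟩⟩
  exact notMem_specSet_diagOp α hα (fun i hi => hμα ⟨i, hi⟩) hinv hμ

lemma specSet_diagOp_eq_range (α : ℕ → K) (hα : ∃ C, ∀ i, ‖α i‖ ≤ C)
    (hα_fin : (Set.range α).Finite) : specSet (diagOp ω α hα) = Set.range α :=
  (specSet_diagOp_subset_range α hα hα_fin).antisymm
    ((range_subset_pointSpec_diagOp α hα).trans (pointSpec_subset_specSet _))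

end Diagonal

theorem stmt14_general {K : Type*} [NontriviallyNormedField K]
    (ω : ℕ → K)
    (α : ℕ → K) (hα : ∃ C, ∀ i, ‖α i‖ ≤ C)
    (hfin : {i : ℕ | α i ≠ 0}.Finite) :
    (specSet (diagOp ω α hα)).Finite ∧
    specSet (diagOp ω α hα) = pointSpec (diagOp ω α hα) ∧
    specSet (diagOp ω α hα) = Set.range α := by
  have hα_fin : (Set.range α).Finite :=
    ((hfin.image α).insert 0).subset (Function.range_subset_insert_image_support α)
  have hspec := specSet_diagOp_eq_range (ω := ω) α hα hα_fin
  refine ⟨hspec ▸ hα_fin, ?_, hspec⟩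
  exact (pointSpec_subset_specSet _).antisymm' (hspec ▸ range_subset_pointSpec_diagOp α hα)

/-- If `D` has finite rank (i.e. `{i | α i ≠ 0}` is finite),
then the spectrum of `D` is finite and equals the point spectrum, which is the
set `{α i : i ∈ ℕ}`. -/
theorem stmt14 {K : Type*} [NontriviallyNormedField K] [CompleteSpace K]
    (hna : ∀ x y : K, ‖x + y‖ ≤ max ‖x‖ ‖y‖)
    (ω : ℕ → K) (hω : ∀ i, ω i ≠ 0)
    (α : ℕ → K) (hα : ∃ C, ∀ i, ‖α i‖ ≤ C)
    (hfin : {i : ℕ | α i ≠ 0}.Finite) :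
    (specSet (diagOp ω α hα)).Finite ∧
    specSet (diagOp ω α hα) = pointSpec (diagOp ω α hα) ∧
    specSet (diagOp ω α hα) = Set.range α :=
  stmt14_general ω α hα hfin
end
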